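/- In the Multicolored Clique reduction (with |U_i| = k², |W_i| = 3k³, and budget k' = C(k,2) + k³): if E_X is a set of at most k' added edges such that G + E_X has dilation at most 3 with respect to Γ, then for each i ∈ [k] and each u ∈ U_i, E_X contains an edge (u,v) with v ∉ ⋃_{j=1}^k U_j. -/

import Mathlib

open SimpleGraph

/-- The weight of a walk in `G`, where each edge `uv` is weighted by the
shortest-path distance `Γ.dist u v` in the (unweighted) graph `Γ`. -/
noncomputable def walkWeight {V : Type*} (Γ G : SimpleGraph V) :
    {x y : V} → G.Walk x y → ℕ
  | x, _, .cons (v := v) _ p => Γ.dist x v + walkWeight Γ G p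
  | _, _, .nil => 0

/-- Weighted shortest-path distance in `G`, with edge weights `Γ.dist`;
`⊤` if there is no walk. -/
noncomputable def wdist {V : Type*} (Γ G : SimpleGraph V) (x y : V) : ℕ∞ :=
  ⨅ p : G.Walk x y, (walkWeight Γ G p : ℕ∞)
/-- Vertices of the Multicolored Clique reduction: the vertices of `H` (`orig`), the
sets `U_i` of size `k²` (`mid`), the sets `W_i` of size `3k³` (`far`), and the
center `ctr = c`. -/
inductive RVert (A : Type*) (k : ℕ) : Type _ where
  | orig : A → RVert A k
  | mid : Fin k → Fin (k ^ 2) → RVert A k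
  | far : Fin k → Fin (3 * k ^ 3) → RVert A k
  | ctr : RVert A k

/-- Adjacency relation generating `Γ`: edges of `H`; all edges between `V_i` and
`U_i`; all edges between `U_i` and `U_j` for `i ≠ j`; all edges between `U_i` and
`W_i`; and all edges from `c` to `V(H) ∪ ⋃ W_i`. -/
def gammaRel {A : Type*} {k : ℕ} (H : SimpleGraph A) (col : A → Fin k) :
    RVert A k → RVert A k → Prop
  | .orig a, .orig b => H.Adj a b
  | .orig a, .mid i _ => col a = i
  | .mid i _, .mid j _ => i ≠ j
  | .mid i _, .far j _ => i = j
  | .ctr, .orig _ => True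
  | .ctr, .far _ _ => True
  | _, _ => False

/-- Adjacency relation generating `G`: only the edges incident to the center `c`. -/
def cRel (A : Type*) (k : ℕ) : RVert A k → RVert A k → Prop
  | .ctr, .orig _ => True
  | .ctr, .far _ _ => True
  | _, _ => False

/-- The metric graph `Γ` of the reduction. -/
def gammaGraph {A : Type*} {k : ℕ} (H : SimpleGraph A) (col : A → Fin k) :
    SimpleGraph (RVert A k) :=
  SimpleGraph.fromRel (gammaRel H col)

/-- The input graph `G` of the reduction (a star centered at `c` plus isolated
vertices). -/
def inputGraph (A : Type*) (k : ℕ) : SimpleGraph (RVert A k) :=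
  SimpleGraph.fromRel (cRel A k)

/-! The budget `C(k,2) + k³` is below `3k³ / 2`, too small to touch all `3k³` vertices of `W_i`,
so some `w ∈ W_i` is untouched by `E_X` and its only neighbour in `G + E_X` is `c`. If every
`E_X`-edge at `u ∈ U_i` stayed inside `⋃ U_j`, each walk from `u` to `w` would start with such an
edge and then pass through `c`, so its weight would be at least
`1 + d_Γ(U_j, c) + d_Γ(c, w) = 1 + 2 + 1 = 4`; but `u` and `w` are adjacent in `Γ`, so dilation `3`
demands a walk of weight at most `3`. -/

namespace SimpleGraph

variable {V : Type*} {G : SimpleGraph V}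

theorem Walk.mem_support_of_forall_adj_eq {u v w : V} (hv : ∀ x, G.Adj x w → x = v)
    (p : G.Walk u w) (hu : u ≠ w) : v ∈ p.support := by
  have hp : ¬ p.Nil := fun h => hu h.eq
  rw [← hv _ (p.adj_penultimate hp)]
  exact p.getVert_mem_support _

theorem card_le_two_mul_ncard_edgeSet [Finite V] {s : Finset V}
    (hs : ∀ v ∈ s, ∃ w, G.Adj v w) : s.card ≤ 2 * G.edgeSet.ncard := by
  classical
  have := Fintype.ofFinite V
  calc s.card = ∑ v ∈ s, 1 := Finset.card_eq_sum_ones s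
    _ ≤ ∑ v ∈ s, G.degree v :=
      Finset.sum_le_sum fun v hv => G.degree_pos_iff_exists_adj v |>.mpr (hs v hv)
    _ ≤ ∑ v, G.degree v := Finset.sum_le_sum_of_subset (Finset.subset_univ s)
    _ = 2 * G.edgeSet.ncard := by
      rw [sum_degrees_eq_twice_card_edges, ← coe_edgeFinset, Set.ncard_coe_finset]

end SimpleGraph

open SimpleGraph

section WalkWeight

variable {V : Type*} {Γ G : SimpleGraph V}

theorem walkWeight_append {x y z : V} (p : G.Walk x y) (q : G.Walk y z) :
    walkWeight Γ G (p.append q) = walkWeight Γ G p + walkWeight Γ G q := by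
  induction p with
  | nil => simp [walkWeight]
  | cons _ _ ih => simp [walkWeight, ih, Nat.add_assoc]

theorem dist_le_walkWeight (hΓ : Γ.Connected) {x y : V} (p : G.Walk x y) :
    Γ.dist x y ≤ walkWeight Γ G p := by
  induction p with
  | nil => simp [walkWeight]
  | @cons x y z _ p ih =>
    calc Γ.dist x z ≤ Γ.dist x y + Γ.dist y z := hΓ.dist_triangle
      _ ≤ walkWeight Γ G (.cons _ p) := by simp only [walkWeight]; omega

theorem dist_add_dist_le_walkWeight (hΓ : Γ.Connected) {x y v : V} (p : G.Walk x y)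
    (hv : v ∈ p.support) : Γ.dist x v + Γ.dist v y ≤ walkWeight Γ G p := by
  classical
  rw [← p.take_spec hv, walkWeight_append]
  exact Nat.add_le_add (dist_le_walkWeight hΓ _) (dist_le_walkWeight hΓ _)

end WalkWeight

section Reduction

variable {A : Type*} {k : ℕ}

instance [Finite A] : Finite (RVert A k) :=
  Finite.of_injective
    (fun v : RVert A k => match v with
      | .orig a => (Sum.inl a : A ⊕ (Fin k × Fin (k ^ 2)) ⊕ (Fin k × Fin (3 * k ^ 3)) ⊕ Unit)
      | .mid i p => .inr (.inl (i, p))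
      | .far i q => .inr (.inr (.inl (i, q)))
      | .ctr => .inr (.inr (.inr ())))
    (by intro v w h; cases v <;> cases w <;> simp_all)

theorem inputGraph_not_adj_mid (i : Fin k) (p : Fin (k ^ 2)) (v : RVert A k) :
    ¬ (inputGraph A k).Adj (.mid i p) v := by
  cases v <;> simp [inputGraph, cRel]

theorem inputGraph_adj_far_iff (i : Fin k) (q : Fin (3 * k ^ 3)) (v : RVert A k) :
    (inputGraph A k).Adj (.far i q) v ↔ v = .ctr := by
  cases v <;> simp [inputGraph, cRel]

variable (H : SimpleGraph A) (col : A → Fin k)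

theorem gammaGraph_adj_mid_far (i : Fin k) (p : Fin (k ^ 2)) (q : Fin (3 * k ^ 3)) :
    (gammaGraph H col).Adj (.mid i p) (.far i q) := by
  simp [gammaGraph, gammaRel]

theorem gammaGraph_connected (hk : 0 < k) : (gammaGraph H col).Connected := by
  have hW : 0 < 3 * k ^ 3 := by positivity
  have hc : ∀ v, (gammaGraph H col).Reachable .ctr v := by
    have far : ∀ i q, (gammaGraph H col).Reachable .ctr (.far i q) := fun i q =>
      Adj.reachable (by simp [gammaGraph, gammaRel])
    rintro (a | ⟨i, p⟩ | ⟨i, q⟩ | _)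
    · exact Adj.reachable (by simp [gammaGraph, gammaRel])
    · exact (far i ⟨0, hW⟩).trans (gammaGraph_adj_mid_far H col i p _).symm.reachable
    · exact far i q
    · rfl
  exact (connected_iff_exists_forall_reachable _).mpr ⟨.ctr, hc⟩

theorem two_le_gammaGraph_dist_mid_ctr (hk : 0 < k) (i : Fin k) (p : Fin (k ^ 2)) :
    2 ≤ (gammaGraph H col).dist (.mid i p) .ctr :=
  ((gammaGraph_connected H col hk).preconnected _ _).one_lt_dist_of_ne_of_not_adj
    (by simp) (by simp [gammaGraph, gammaRel])

theorem exists_far_forall_not_adj [Finite A] {EX : SimpleGraph (RVert A k)}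
    (hcard : EX.edgeSet.ncard ≤ k.choose 2 + k ^ 3) (i : Fin k) :
    ∃ q, ∀ v, ¬ EX.Adj (.far i q) v := by
  by_contra! h
  have hW := EX.card_le_two_mul_ncard_edgeSet
    (s := Finset.univ.map ⟨RVert.far i, fun _ _ h => by injection h⟩) fun _ hv => by
      obtain ⟨q, -, rfl⟩ := Finset.mem_map.mp hv
      exact h q
  rw [Finset.card_map, Finset.card_univ, Fintype.card_fin] at hW
  have hk := i.pos
  have hchoose : 2 * k.choose 2 < k ^ 3 := by
    rw [Nat.choose_two_right]
    calc 2 * (k * (k - 1) / 2) ≤ k * (k - 1) := Nat.mul_div_le _ _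
      _ < k * k := Nat.mul_lt_mul_of_pos_left (by omega) hk
      _ ≤ k ^ 3 := by nlinarith
  omega

theorem four_le_walkWeight {EX : SimpleGraph (RVert A k)} {i : Fin k} {p : Fin (k ^ 2)}
    {q : Fin (3 * k ^ 3)} (hp : ∀ v, EX.Adj (.mid i p) v → ∃ j r, v = .mid j r)
    (hq : ∀ v, ¬ EX.Adj (.far i q) v) (w : (inputGraph A k ⊔ EX).Walk (.mid i p) (.far i q)) :
    4 ≤ walkWeight (gammaGraph H col) _ w := by
  have hΓ := gammaGraph_connected H col i.pos
  cases w with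
  | cons h w =>
    obtain ⟨j, r, rfl⟩ := hp _ (h.resolve_left (inputGraph_not_adj_mid _ _ _))
    have hfar : ∀ v, (inputGraph A k ⊔ EX).Adj v (.far i q) → v = .ctr := fun v hv =>
      (inputGraph_adj_far_iff i q v).mp (hv.symm.resolve_right (hq v))
    have hrest := dist_add_dist_le_walkWeight hΓ w (w.mem_support_of_forall_adj_eq hfar (by simp))
    have hfirst := hΓ.pos_dist_of_ne h.ne
    have hmid_ctr := two_le_gammaGraph_dist_mid_ctr H col i.pos j r
    have hctr_far := hΓ.pos_dist_of_ne (u := .ctr) (v := .far i q) (by simp)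
    simp only [walkWeight]
    omega

end Reduction

theorem solution_edge_leaves_U_general {A : Type*} [Fintype A]
    (k : ℕ) (H : SimpleGraph A) (col : A → Fin k)
    (EX : SimpleGraph (RVert A k))
    (hcard : EX.edgeSet.ncard ≤ Nat.choose k 2 + k ^ 3)
    (hdil : ∀ x y : RVert A k,
      wdist (gammaGraph H col) (inputGraph A k ⊔ EX) x y ≤
        (3 : ℕ∞) * ((gammaGraph H col).dist x y : ℕ∞)) :
    ∀ (i : Fin k) (p : Fin (k ^ 2)),
      ∃ y : RVert A k, EX.Adj (RVert.mid i p) y ∧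
        ∀ (j : Fin k) (q : Fin (k ^ 2)), y ≠ RVert.mid j q := by
  intro i p
  by_contra! hp
  obtain ⟨q, hq⟩ := exists_far_forall_not_adj hcard i
  have hwdist : (4 : ℕ∞) ≤ wdist (gammaGraph H col) _ (.mid i p) (.far i q) :=
    le_iInf fun w => by exact_mod_cast four_le_walkWeight H col hp hq w
  have hdist : (gammaGraph H col).dist (.mid i p) (.far i q) = 1 :=
    dist_eq_one_iff_adj.mpr (gammaGraph_adj_mid_far H col i p q)
  have := hwdist.trans (hdil _ _)
  rw [hdist] at this
  norm_num at this

/-- In the Multicolored Clique reduction with budget `k' = C(k,2) + k³`: if `E_X` is a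
set of at most `k'` added edges such that `G + E_X` has dilation at most `3`, then
every vertex `u ∈ U_i` is incident to an edge of `E_X` whose other endpoint lies
outside `⋃_j U_j`. -/
theorem solution_edge_leaves_U {A : Type*} [Fintype A]
    (k : ℕ) (hk : 2 ≤ k) (H : SimpleGraph A) (col : A → Fin k)
    (EX : SimpleGraph (RVert A k))
    (hcard : EX.edgeSet.ncard ≤ Nat.choose k 2 + k ^ 3)
    (hdil : ∀ x y : RVert A k,
      wdist (gammaGraph H col) (inputGraph A k ⊔ EX) x y ≤
        (3 : ℕ∞) * ((gammaGraph H col).dist x y : ℕ∞)) :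
    ∀ (i : Fin k) (p : Fin (k ^ 2)),
      ∃ y : RVert A k, EX.Adj (RVert.mid i p) y ∧
        ∀ (j : Fin k) (q : Fin (k ^ 2)), y ≠ RVert.mid j q :=
  solution_edge_leaves_U_general k H col EX hcard hdil
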